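/- (Theorem 3: two-sided bound on the return of the mixed behavior policy.) Suppose 0 ≤ r(s,a) ≤ R_max for all s ∈ S and a ∈ A, and that for every state s, π^s(s)(a) > 0 whenever π^t(s)(a) > 0. Let π_mix be the mixed policy determined by teacher π^t, student π^s, and intervention indicator T : S → {0,1}, and let ω := E_{s ~ ν^{π_mix,μ}}[T(s)] be the intervention rate. Let H and κ be real numbers with H − κ ≥ 0 such that D_KL(π^t(s) ‖ π^s(s)) ≤ H − κ for every state s. Then J(π^t) − (√2 · (1−ω) · R_max/(1−γ)²) · √(H − κ) ≤ J(π_mix) ≤ J(π^t) + (√2 · (1−ω) · R_max/(1−γ)²) · √(H − κ). -/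

import Mathlib

open scoped BigOperators

section MDPDefs

variable {S A : Type*} [Fintype S] [Fintype A]

/-- Expectation of a real-valued function under a PMF on a finite type (a finite sum). -/
noncomputable def pmfExp {X : Type*} [Fintype X] (p : PMF X) (f : X → ℝ) : ℝ :=
  ∑ x, (p x).toReal * f x

/-- Time-`t` state distribution `d_t^{π,μ}`:
`d_0 = μ` and `d_{t+1}` is obtained by sampling `x ~ d_t`, `a ~ π x`, `s' ~ P x a`. -/
noncomputable def stateDist (P : S → A → PMF S) (π : S → PMF A) (μ : PMF S) : ℕ → PMF S
  | 0 => μ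
  | t + 1 => (stateDist P π μ t).bind fun x => (π x).bind fun a => P x a

/-- State value function `V^π(s) = Σ_t γ^t E_{x ~ d_t^{π, δ_s}} E_{a ~ π x}[r x a]`. -/
noncomputable def Vval (P : S → A → PMF S) (r : S → A → ℝ) (γ : ℝ) (π : S → PMF A) (s : S) : ℝ :=
  ∑' t : ℕ, γ ^ t * pmfExp (stateDist P π (PMF.pure s) t) fun x => pmfExp (π x) fun a => r x a

/-- Return from an initial distribution: `J(π) = E_{s~μ}[V^π(s)]`. -/
noncomputable def Jret (P : S → A → PMF S) (r : S → A → ℝ) (γ : ℝ) (π : S → PMF A) (μ : PMF S) : ℝ :=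
  pmfExp μ (Vval P r γ π)

/-- State-action value `Q^π(s,a) = r(s,a) + γ E_{s' ~ P s a}[V^π(s')]`. -/
noncomputable def Qval (P : S → A → PMF S) (r : S → A → ℝ) (γ : ℝ) (π : S → PMF A)
    (s : S) (a : A) : ℝ :=
  r s a + γ * pmfExp (P s a) (Vval P r γ π)

/-- Advantage `A^π(s,a) = Q^π(s,a) - V^π(s)`. -/
noncomputable def Adv (P : S → A → PMF S) (r : S → A → ℝ) (γ : ℝ) (π : S → PMF A)
    (s : S) (a : A) : ℝ :=
  Qval P r γ π s a - Vval P r γ π s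

/-- Discounted state-visitation distribution `ν^{π,μ}(s) = (1-γ) Σ_t γ^t d_t^{π,μ}(s)`. -/
noncomputable def visit (P : S → A → PMF S) (π : S → PMF A) (μ : PMF S) (γ : ℝ) (s : S) : ℝ :=
  (1 - γ) * ∑' t : ℕ, γ ^ t * (stateDist P π μ t s).toReal

/-- `ℓ¹` distance between two PMFs on a finite type. -/
noncomputable def l1Dist {X : Type*} [Fintype X] (p q : PMF X) : ℝ :=
  ∑ x, |(p x).toReal - (q x).toReal|

/-- KL divergence `D_KL(p‖q) = Σ_{x : p x > 0} p x * log (p x / q x)` on a finite type. -/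
noncomputable def pmfKL {X : Type*} [Fintype X] (p q : PMF X) : ℝ :=
  ∑ x, if p x = 0 then 0 else (p x).toReal * Real.log ((p x).toReal / (q x).toReal)

/-- Mixed behavior policy: teacher's action when the intervention indicator is on,
student's action otherwise. -/
noncomputable def mixPolicy {S A : Type*} (πt πs : S → PMF A) (T : S → Bool) (s : S) : PMF A :=
  if T s then πt s else πs s

/-- Finite-horizon value of a deterministic policy, defined recursively:
`V_0(s) = r s (σ s)` and `V_{k+1}(s) = r s (σ s) + γ E_{s' ~ P s (σ s)}[V_k s']`. -/
noncomputable def Vfin (P : S → A → PMF S) (r : S → A → ℝ) (γ : ℝ) (σ : S → A) : ℕ → S → ℝ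
  | 0, s => r s (σ s)
  | k + 1, s => r s (σ s) + γ * pmfExp (P s (σ s)) (Vfin P r γ σ k)

/-- Finite-horizon value of the switching (mixed) policy that at each step picks whichever of
the two deterministic policies gives the larger continuation value. -/
noncomputable def Wswitch (P : S → A → PMF S) (r : S → A → ℝ) (γ : ℝ)
    (πt πs : S → A) : ℕ → S → ℝ
  | 0, s => max (r s (πt s)) (r s (πs s))
  | k + 1, s =>
      max (r s (πt s) + γ * pmfExp (P s (πt s)) (Wswitch P r γ πt πs k))
          (r s (πs s) + γ * pmfExp (P s (πs s)) (Wswitch P r γ πt πs k))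

end MDPDefs

/-! By the performance-difference lemma,
`(1 - γ) (J(π_mix) - J(π^t)) = E_{s ~ ν^{π_mix}} E_{a ~ π_mix(s)} A^{π^t}(s, a)`.
The inner expectation vanishes where the teacher acts; where the student acts it equals
`E_{π^s(s)} Q^{π^t}(s, ·) - E_{π^t(s)} Q^{π^t}(s, ·)`, which is at most
`‖π^t(s) - π^s(s)‖₁ R_max / (1 - γ) ≤ √(2 (H - κ)) R_max / (1 - γ)` by Pinsker's inequality,
and those states carry `ν`-mass `1 - ω`.

Pinsker's inequality follows from the pointwise bound `3 (t - 1)² ≤ 2 (t + 2) (t log t - t + 1)`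
by Cauchy–Schwarz, since the weights `2 (p + 2 q) / 3` sum to `2`. -/

open Finset InformationTheory

section Expectation

variable {X Y : Type*} [Fintype X]

lemma PMF.sum_toReal_eq_one (p : PMF X) : ∑ x, (p x).toReal = 1 := by
  have h := p.tsum_coe
  rw [tsum_fintype] at h
  rw [← ENNReal.toReal_sum fun x _ => p.apply_ne_top x, h, ENNReal.toReal_one]

lemma PMF.bind_apply_toReal (p : PMF X) (k : X → PMF Y) (y : Y) :
    (p.bind k y).toReal = ∑ x, (p x).toReal * (k x y).toReal := by
  rw [PMF.bind_apply, tsum_fintype, ENNReal.toReal_sum fun x _ =>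
    ENNReal.mul_ne_top (p.apply_ne_top x) ((k x).apply_ne_top y)]
  simp [ENNReal.toReal_mul]

lemma pmfExp_const (p : PMF X) (c : ℝ) : pmfExp p (fun _ => c) = c := by
  simp [pmfExp, ← sum_mul, p.sum_toReal_eq_one]

lemma pmfExp_add (p : PMF X) (f g : X → ℝ) :
    pmfExp p (fun x => f x + g x) = pmfExp p f + pmfExp p g := by
  simp [pmfExp, mul_add, sum_add_distrib]

lemma pmfExp_sub (p : PMF X) (f g : X → ℝ) :
    pmfExp p (fun x => f x - g x) = pmfExp p f - pmfExp p g := by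
  simp [pmfExp, mul_sub, sum_sub_distrib]

lemma pmfExp_const_mul (p : PMF X) (c : ℝ) (f : X → ℝ) :
    pmfExp p (fun x => c * f x) = c * pmfExp p f := by
  simp [pmfExp, mul_sum, mul_left_comm]

lemma pmfExp_mono (p : PMF X) {f g : X → ℝ} (h : ∀ x, f x ≤ g x) : pmfExp p f ≤ pmfExp p g :=
  sum_le_sum fun x _ => mul_le_mul_of_nonneg_left (h x) ENNReal.toReal_nonneg

lemma pmfExp_nonneg (p : PMF X) {f : X → ℝ} (h : ∀ x, 0 ≤ f x) : 0 ≤ pmfExp p f :=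
  pmfExp_const p 0 ▸ pmfExp_mono p h

lemma pmfExp_le (p : PMF X) {f : X → ℝ} {c : ℝ} (h : ∀ x, f x ≤ c) : pmfExp p f ≤ c :=
  pmfExp_const p c ▸ pmfExp_mono p h

lemma abs_pmfExp_le (p : PMF X) {f : X → ℝ} {c : ℝ} (h : ∀ x, |f x| ≤ c) :
    |pmfExp p f| ≤ c :=
  abs_le.2 ⟨pmfExp_const p (-c) ▸ pmfExp_mono p fun x => (abs_le.1 (h x)).1,
    pmfExp_le p fun x => (abs_le.1 (h x)).2⟩

lemma pmfExp_pure (x : X) (f : X → ℝ) : pmfExp (PMF.pure x) f = f x := by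
  classical
  simp [pmfExp, PMF.pure_apply, apply_ite ENNReal.toReal, ite_mul]

lemma pmfExp_bind [Fintype Y] (p : PMF X) (k : X → PMF Y) (f : Y → ℝ) :
    pmfExp (p.bind k) f = pmfExp p fun x => pmfExp (k x) f := by
  simp only [pmfExp, PMF.bind_apply_toReal, sum_mul, mul_sum, mul_assoc]
  exact sum_comm

lemma tsum_pmfExp (p : PMF X) {F : ℕ → X → ℝ} (hF : ∀ x, Summable fun t => F t x) :
    ∑' t, pmfExp p (F t) = pmfExp p fun x => ∑' t, F t x := by
  simp only [pmfExp, ← tsum_mul_left]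
  exact Summable.tsum_finsetSum fun x _ => (hF x).mul_left _

lemma abs_pmfExp_sub_pmfExp_le (p q : PMF X) {f : X → ℝ} {C : ℝ} (hf : ∀ x, |f x| ≤ C) :
    |pmfExp p f - pmfExp q f| ≤ l1Dist p q * C := by
  rw [pmfExp, pmfExp, ← sum_sub_distrib, l1Dist, sum_mul]
  refine (abs_sum_le_sum_abs _ _).trans (sum_le_sum fun x _ => ?_)
  rw [← sub_mul, abs_mul]
  exact mul_le_mul_of_nonneg_left (hf x) (abs_nonneg _)

end Expectation

section Pinsker

lemma hasDerivAt_klFun_sub {t : ℝ} (ht : 0 < t) :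
    HasDerivAt (fun x => klFun x - 3 * (x - 1) ^ 2 / (2 * (x + 2)))
      (Real.log t - 3 * ((t - 1) * (t + 5)) / (2 * (t + 2) ^ 2)) t := by
  have hq : HasDerivAt (fun x => 3 * (x - 1) ^ 2 / (2 * (x + 2)))
      ((3 * (2 * (t - 1) ^ 1 * 1) * (2 * (t + 2)) - 3 * (t - 1) ^ 2 * (2 * 1)) /
        (2 * (t + 2)) ^ 2) t :=
    ((((hasDerivAt_id t).sub_const 1).pow 2).const_mul 3).div
      (((hasDerivAt_id t).add_const 2).const_mul 2) (by positivity)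
  refine ((hasDerivAt_klFun ht.ne').sub hq).congr_deriv ?_
  field_simp
  ring

lemma hasDerivAt_log_sub {t : ℝ} (ht : 0 < t) :
    HasDerivAt (fun x => Real.log x - 3 * ((x - 1) * (x + 5)) / (2 * (x + 2) ^ 2))
      ((t - 1) ^ 2 * (t + 8) / (t * (t + 2) ^ 3)) t := by
  have hq : HasDerivAt (fun x => 3 * ((x - 1) * (x + 5)) / (2 * (x + 2) ^ 2))
      ((3 * (1 * (t + 5) + (t - 1) * 1) * (2 * (t + 2) ^ 2) -
        3 * ((t - 1) * (t + 5)) * (2 * (2 * (t + 2) ^ 1 * 1))) / (2 * (t + 2) ^ 2) ^ 2) t :=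
    ((((hasDerivAt_id t).sub_const 1).mul ((hasDerivAt_id t).add_const 5)).const_mul 3).div
      ((((hasDerivAt_id t).add_const 2).pow 2).const_mul 2) (by positivity)
  refine ((Real.hasDerivAt_log ht.ne').sub hq).congr_deriv ?_
  field_simp
  ring

lemma monotoneOn_log_sub :
    MonotoneOn (fun x => Real.log x - 3 * ((x - 1) * (x + 5)) / (2 * (x + 2) ^ 2))
      (Set.Ioi 0) := by
  refine monotoneOn_of_hasDerivWithinAt_nonneg (convex_Ioi 0)
    (f' := fun x => (x - 1) ^ 2 * (x + 8) / (x * (x + 2) ^ 3))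
    (fun x hx => (hasDerivAt_log_sub hx).continuousAt.continuousWithinAt) (fun x hx => ?_)
    (fun x hx => ?_) <;> rw [interior_Ioi] at hx
  · exact (hasDerivAt_log_sub hx).hasDerivWithinAt
  · have : 0 < x := hx
    positivity

lemma sq_sub_one_div_le_klFun {t : ℝ} (ht : 0 ≤ t) :
    3 * (t - 1) ^ 2 / (2 * (t + 2)) ≤ klFun t := by
  -- the derivative of the difference is increasing and vanishes at `1`
  have hderiv_one : Real.log 1 - 3 * ((1 - 1) * (1 + 5)) / (2 * (1 + 2) ^ 2) = 0 := by norm_num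
  have hcont : ∀ x : ℝ, 0 ≤ x →
      ContinuousAt (fun y => klFun y - 3 * (y - 1) ^ 2 / (2 * (y + 2))) x := by
    intro x hx
    fun_prop (disch := exact ne_of_gt (by linarith))
  have hmin : IsMinOn (fun x => klFun x - 3 * (x - 1) ^ 2 / (2 * (x + 2))) (Set.Ici 0) 1 := by
    refine isMinOn_Ici_of_deriv (hcont 0 le_rfl) (hcont 1 zero_le_one)
      (fun x hx => (hasDerivAt_klFun_sub hx.1).differentiableAt.differentiableWithinAt)
      (fun x hx =>
        (hasDerivAt_klFun_sub (one_pos.trans hx)).differentiableAt.differentiableWithinAt)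
      (fun x hx => ?_) (fun x hx => ?_)
    · rw [(hasDerivAt_klFun_sub hx.1).deriv]
      exact hderiv_one ▸ monotoneOn_log_sub hx.1 (Set.mem_Ioi.2 one_pos) hx.2.le
    · rw [(hasDerivAt_klFun_sub (one_pos.trans hx)).deriv]
      exact hderiv_one ▸ monotoneOn_log_sub (Set.mem_Ioi.2 one_pos)
        (Set.mem_Ioi.2 (one_pos.trans hx)) hx.le
  have := hmin ht
  simp only [Set.mem_ofPred_eq, klFun_one] at this
  linarith

lemma three_mul_sq_sub_le_mul_kl {x y : ℝ} (hx : 0 < x) (hy : 0 < y) :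
    3 * (x - y) ^ 2 ≤ 2 * (x + 2 * y) * (x * Real.log (x / y) - x + y) := by
  have h := (div_le_iff₀ (by positivity)).1 (sq_sub_one_div_le_klFun (div_pos hx hy).le)
  have e1 : 3 * (x - y) ^ 2 = y ^ 2 * (3 * (x / y - 1) ^ 2) := by
    field_simp
  have e2 : 2 * (x + 2 * y) * (x * Real.log (x / y) - x + y) =
      y ^ 2 * (klFun (x / y) * (2 * (x / y + 2))) := by
    rw [klFun_apply]
    field_simp
    ring
  rw [e1, e2]
  exact mul_le_mul_of_nonneg_left h (sq_nonneg y)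

variable {X : Type*} [Fintype X]

theorem l1Dist_le_sqrt_two_mul_pmfKL (p q : PMF X) (habs : ∀ x, 0 < p x → 0 < q x) :
    l1Dist p q ≤ Real.sqrt (2 * pmfKL p q) := by
  set k : X → ℝ := fun x => (if p x = 0 then 0 else
    (p x).toReal * Real.log ((p x).toReal / (q x).toReal)) - (p x).toReal + (q x).toReal
  have hterm : ∀ x, 0 ≤ k x ∧
      |(p x).toReal - (q x).toReal| ^ 2 ≤ k x * (2 / 3 * ((p x).toReal + 2 * (q x).toReal)) := by
    intro x
    have hq0 : 0 ≤ (q x).toReal := ENNReal.toReal_nonneg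
    by_cases hp : p x = 0
    · simp only [k, hp, if_true, ENNReal.toReal_zero]
      refine ⟨by linarith, ?_⟩
      rw [sq_abs]
      nlinarith
    · have hP : 0 < (p x).toReal := ENNReal.toReal_pos hp (p.apply_ne_top x)
      have hQ : 0 < (q x).toReal :=
        ENNReal.toReal_pos (habs x (pos_iff_ne_zero.2 hp)).ne' (q.apply_ne_top x)
      have h := three_mul_sq_sub_le_mul_kl hP hQ
      simp only [k, hp, if_false]
      refine ⟨nonneg_of_mul_nonneg_right (h.trans' (by positivity)) (by positivity), ?_⟩
      rw [sq_abs]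
      linarith
  have hk : ∑ x, k x = pmfKL p q := by
    simp only [k, sum_add_distrib, sum_sub_distrib, p.sum_toReal_eq_one, q.sum_toReal_eq_one,
      pmfKL]
    ring
  have hw : ∑ x, 2 / 3 * ((p x).toReal + 2 * (q x).toReal) = 2 := by
    simp only [← mul_sum, sum_add_distrib, p.sum_toReal_eq_one, q.sum_toReal_eq_one]
    norm_num
  have hcs := sum_sq_le_sum_mul_sum_of_sq_le_mul univ (fun x _ => (hterm x).1)
    (fun x _ => by positivity) (fun x _ => (hterm x).2)
  rw [hk, hw, mul_comm] at hcs
  exact Real.le_sqrt_of_sq_le hcs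

lemma abs_pmfExp_sub_le_of_pmfKL_le {p q : PMF X} (habs : ∀ x, 0 < p x → 0 < q x) {δ : ℝ}
    (hKL : pmfKL p q ≤ δ) {f : X → ℝ} {C : ℝ} (hf : ∀ x, |f x| ≤ C) :
    |pmfExp q f - pmfExp p f| ≤ Real.sqrt (2 * δ) * C := by
  obtain ⟨x, -⟩ := p.support_nonempty
  have hC : 0 ≤ C := (abs_nonneg _).trans (hf x)
  calc |pmfExp q f - pmfExp p f| = |pmfExp p f - pmfExp q f| := abs_sub_comm _ _
    _ ≤ l1Dist p q * C := abs_pmfExp_sub_pmfExp_le p q hf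
    _ ≤ Real.sqrt (2 * pmfKL p q) * C :=
      mul_le_mul_of_nonneg_right (l1Dist_le_sqrt_two_mul_pmfKL p q habs) hC
    _ ≤ Real.sqrt (2 * δ) * C := by gcongr

end Pinsker

lemma summable_pow_mul_of_abs_le {γ C : ℝ} (hγ0 : 0 ≤ γ) (hγ1 : γ < 1) {c : ℕ → ℝ}
    (hc : ∀ t, |c t| ≤ C) : Summable fun t => γ ^ t * c t := by
  refine ((summable_geometric_of_lt_one hγ0 hγ1).mul_left C).of_norm_bounded fun t => ?_
  rw [Real.norm_eq_abs, abs_mul, abs_pow, abs_of_nonneg hγ0, mul_comm]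
  exact mul_le_mul_of_nonneg_right (hc t) (pow_nonneg hγ0 t)

section StateDistribution

variable {S A : Type*} (P : S → A → PMF S) (π : S → PMF A)

noncomputable def transition (x : S) : PMF S := (π x).bind (P x)

lemma stateDist_succ (μ : PMF S) (t : ℕ) :
    stateDist P π μ (t + 1) = (stateDist P π μ t).bind (transition P π) := rfl

lemma stateDist_eq_bind_pure (μ : PMF S) (t : ℕ) :
    stateDist P π μ t = μ.bind fun s => stateDist P π (PMF.pure s) t := by
  induction t with
  | zero => exact (PMF.bind_pure μ).symm
  | succ t ih => rw [stateDist_succ, ih, PMF.bind_bind]; rfl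

lemma stateDist_succ' (μ : PMF S) (t : ℕ) :
    stateDist P π μ (t + 1) = stateDist P π (μ.bind (transition P π)) t := by
  induction t with
  | zero => rfl
  | succ t ih => rw [stateDist_succ, ih, stateDist_succ]

lemma stateDist_pure_succ (s : S) (t : ℕ) :
    stateDist P π (PMF.pure s) (t + 1) =
      (transition P π s).bind fun s' => stateDist P π (PMF.pure s') t := by
  rw [stateDist_succ', PMF.pure_bind, stateDist_eq_bind_pure]

variable {γ : ℝ} (hγ0 : 0 ≤ γ) (hγ1 : γ < 1)
include hγ0 hγ1

lemma visit_nonneg (μ : PMF S) (s : S) : 0 ≤ visit P π μ γ s :=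
  mul_nonneg (by linarith)
    (tsum_nonneg fun t => mul_nonneg (pow_nonneg hγ0 t) ENNReal.toReal_nonneg)

variable [Fintype S]

lemma summable_pow_mul_pmfExp_stateDist (μ : PMF S) {f : S → ℝ} {C : ℝ}
    (hf : ∀ s, |f s| ≤ C) : Summable fun t => γ ^ t * pmfExp (stateDist P π μ t) f :=
  summable_pow_mul_of_abs_le hγ0 hγ1 fun _ => abs_pmfExp_le _ hf

lemma sum_visit_mul (μ : PMF S) (f : S → ℝ) :
    ∑ s, visit P π μ γ s * f s = (1 - γ) * ∑' t, γ ^ t * pmfExp (stateDist P π μ t) f := by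
  have hsum : ∀ s, Summable fun t => γ ^ t * ((stateDist P π μ t s).toReal * f s) := fun s =>
    summable_pow_mul_of_abs_le hγ0 hγ1 (C := |f s|) fun t => by
      rw [abs_mul, abs_of_nonneg ENNReal.toReal_nonneg]
      exact mul_le_of_le_one_left (abs_nonneg _) (ENNReal.toReal_le_of_le_ofReal zero_le_one
        (by simpa using (stateDist P π μ t).coe_le_one s))
  simp only [visit, pmfExp, mul_assoc, ← mul_sum]
  congr 1
  simp only [mul_sum, ← Summable.tsum_finsetSum fun s _ => hsum s, ← tsum_mul_right, mul_assoc]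

lemma sum_visit (μ : PMF S) : ∑ s, visit P π μ γ s = 1 := by
  have h := sum_visit_mul P π hγ0 hγ1 μ fun _ => 1
  simp only [mul_one, pmfExp_const] at h
  rw [h, tsum_geometric_of_lt_one hγ0 hγ1, mul_inv_cancel₀ (by linarith)]

end StateDistribution

section Value

variable {S A : Type*} [Fintype S] [Fintype A] (P : S → A → PMF S) (r : S → A → ℝ)

noncomputable def expReward (π : S → PMF A) (x : S) : ℝ := pmfExp (π x) (r x)

lemma Vval_eq_tsum (π : S → PMF A) (γ : ℝ) (s : S) :
    Vval P r γ π s = ∑' t, γ ^ t * pmfExp (stateDist P π (PMF.pure s) t) (expReward r π) := rfl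

lemma pmfExp_Qval (π' π : S → PMF A) (γ : ℝ) (s : S) :
    pmfExp (π' s) (Qval P r γ π s) =
      expReward r π' s + γ * pmfExp (transition P π' s) (Vval P r γ π) := by
  change pmfExp _ (fun a => r s a + γ * pmfExp (P s a) _) = _
  rw [pmfExp_add, pmfExp_const_mul, transition, pmfExp_bind]
  rfl

lemma pmfExp_Adv (π' π : S → PMF A) (γ : ℝ) (s : S) :
    pmfExp (π' s) (Adv P r γ π s) = pmfExp (π' s) (Qval P r γ π s) - Vval P r γ π s := by
  change pmfExp _ (fun a => Qval P r γ π s a - Vval P r γ π s) = _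
  rw [pmfExp_sub, pmfExp_const]

variable {γ : ℝ} (hγ0 : 0 ≤ γ) (hγ1 : γ < 1) {Rmax : ℝ}
  (hr : ∀ s a, 0 ≤ r s a ∧ r s a ≤ Rmax)
include hγ0 hγ1 hr

omit [Fintype S] hγ0 hγ1 in
lemma abs_expReward_le (π : S → PMF A) (x : S) : |expReward r π x| ≤ Rmax :=
  abs_pmfExp_le _ fun a => (abs_of_nonneg (hr x a).1).trans_le (hr x a).2

lemma summable_pow_mul_pmfExp_expReward (π : S → PMF A) (μ : PMF S) :
    Summable fun t => γ ^ t * pmfExp (stateDist P π μ t) (expReward r π) :=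
  summable_pow_mul_pmfExp_stateDist P π hγ0 hγ1 μ (abs_expReward_le r hr π)

omit hγ1 in
lemma Vval_nonneg (π : S → PMF A) (s : S) : 0 ≤ Vval P r γ π s :=
  tsum_nonneg fun t => mul_nonneg (pow_nonneg hγ0 t)
    (pmfExp_nonneg _ fun x => pmfExp_nonneg _ fun a => (hr x a).1)

lemma Vval_le (π : S → PMF A) (s : S) : Vval P r γ π s ≤ Rmax / (1 - γ) := by
  rw [div_eq_mul_inv, ← tsum_geometric_of_lt_one hγ0 hγ1, ← tsum_mul_left]
  refine (summable_pow_mul_pmfExp_expReward P r hγ0 hγ1 hr π _).tsum_le_tsum (fun t => ?_)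
    ((summable_geometric_of_lt_one hγ0 hγ1).mul_left Rmax)
  rw [mul_comm Rmax]
  exact mul_le_mul_of_nonneg_left
    (pmfExp_le _ fun x => pmfExp_le _ fun a => (hr x a).2) (pow_nonneg hγ0 t)

lemma Vval_eq_expReward_add (π : S → PMF A) (s : S) :
    Vval P r γ π s = expReward r π s + γ * pmfExp (transition P π s) (Vval P r γ π) := by
  have hsum := summable_pow_mul_pmfExp_expReward P r hγ0 hγ1 hr π
  have hshift : ∀ t,
      γ ^ (t + 1) * pmfExp (stateDist P π (PMF.pure s) (t + 1)) (expReward r π) =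
        γ * pmfExp (transition P π s)
          fun s' => γ ^ t * pmfExp (stateDist P π (PMF.pure s') t) (expReward r π) := fun t => by
    rw [stateDist_pure_succ, pmfExp_bind, pmfExp_const_mul, pow_succ, mul_comm _ γ, mul_assoc]
  rw [Vval_eq_tsum, (hsum _).tsum_eq_zero_add, tsum_congr hshift, tsum_mul_left,
    tsum_pmfExp _ fun s' => hsum _]
  simp only [pow_zero, one_mul, stateDist, pmfExp_pure, ← Vval_eq_tsum]

lemma Vval_eq_pmfExp_Qval (π : S → PMF A) (s : S) :
    Vval P r γ π s = pmfExp (π s) (Qval P r γ π s) := by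
  rw [pmfExp_Qval, ← Vval_eq_expReward_add P r hγ0 hγ1 hr]

lemma abs_Qval_le (π : S → PMF A) (s : S) (a : A) :
    |Qval P r γ π s a| ≤ Rmax / (1 - γ) := by
  have hV : pmfExp (P s a) (Vval P r γ π) ≤ Rmax / (1 - γ) :=
    pmfExp_le _ (Vval_le P r hγ0 hγ1 hr π)
  have hQ : Qval P r γ π s a ≤ Rmax / (1 - γ) := by
    calc Qval P r γ π s a ≤ Rmax + γ * (Rmax / (1 - γ)) :=
          add_le_add (hr s a).2 (mul_le_mul_of_nonneg_left hV hγ0)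
      _ = Rmax / (1 - γ) := by field_simp [(by linarith : 1 - γ ≠ 0)]; ring
  have h0 : 0 ≤ Qval P r γ π s a :=
    add_nonneg (hr s a).1 (mul_nonneg hγ0 (pmfExp_nonneg _ (Vval_nonneg P r hγ0 hr π)))
  rwa [abs_of_nonneg h0]

lemma Jret_eq_tsum (π : S → PMF A) (μ : PMF S) :
    Jret P r γ π μ = ∑' t, γ ^ t * pmfExp (stateDist P π μ t) (expReward r π) := by
  rw [Jret, funext (Vval_eq_tsum P r π γ),
    ← tsum_pmfExp μ fun s => summable_pow_mul_pmfExp_expReward P r hγ0 hγ1 hr π _]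
  refine tsum_congr fun t => ?_
  rw [stateDist_eq_bind_pure P π μ t, pmfExp_bind, pmfExp_const_mul]

lemma Jret_sub_Jret_eq_tsum (π' π : S → PMF A) (μ : PMF S) :
    Jret P r γ π' μ - Jret P r γ π μ = ∑' t, γ ^ t *
      pmfExp (stateDist P π' μ t) fun s => pmfExp (π' s) (Adv P r γ π s) := by
  set w : ℕ → ℝ := fun t => γ ^ t * pmfExp (stateDist P π' μ t) (Vval P r γ π)
  have hw : Summable w := summable_pow_mul_pmfExp_stateDist P π' hγ0 hγ1 μ fun s =>
    (abs_of_nonneg (Vval_nonneg P r hγ0 hr π s)).trans_le (Vval_le P r hγ0 hγ1 hr π s)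
  have hterm : ∀ t, γ ^ t * pmfExp (stateDist P π' μ t)
      (fun s => pmfExp (π' s) (Adv P r γ π s)) =
      γ ^ t * pmfExp (stateDist P π' μ t) (expReward r π') + (w (t + 1) - w t) := fun t => by
    simp only [w, pmfExp_Adv, pmfExp_Qval, pmfExp_add, pmfExp_sub, pmfExp_const_mul,
      stateDist_succ, pmfExp_bind, pow_succ]
    ring
  have htel : ∑' t, (w (t + 1) - w t) = -w 0 := by
    rw [((summable_nat_add_iff 1).2 hw).tsum_sub hw, hw.tsum_eq_zero_add]
    ring
  have hw0 : w 0 = Jret P r γ π μ := by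
    simp only [w, pow_zero, one_mul]
    rfl
  rw [tsum_congr hterm, (summable_pow_mul_pmfExp_expReward P r hγ0 hγ1 hr π' μ).tsum_add
    (((summable_nat_add_iff 1).2 hw).sub hw), htel, hw0, Jret_eq_tsum P r hγ0 hγ1 hr π']
  ring

lemma abs_Jret_mixPolicy_sub_le (πt πs : S → PMF A) (T : S → Bool) (μ : PMF S) {ε : ℝ}
    (hε : ∀ s, T s = false →
      |pmfExp (πs s) (Qval P r γ πt s) - pmfExp (πt s) (Qval P r γ πt s)| ≤ ε) :
    |Jret P r γ (mixPolicy πt πs T) μ - Jret P r γ πt μ| ≤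
      (1 - ∑ s, visit P (mixPolicy πt πs T) μ γ s * (if T s then 1 else 0)) / (1 - γ) * ε := by
  set ν := visit P (mixPolicy πt πs T) μ γ
  have hγ : 0 < 1 - γ := by linarith
  have hν : ∀ s, 0 ≤ ν s := visit_nonneg P _ hγ0 hγ1 μ
  have hadv : ∀ s,
      |pmfExp (mixPolicy πt πs T s) (Adv P r γ πt s)| ≤ if T s then 0 else ε := by
    intro s
    rw [pmfExp_Adv, Vval_eq_pmfExp_Qval P r hγ0 hγ1 hr]
    cases hT : T s
    · simpa [mixPolicy, hT] using hε s hT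
    · simp [mixPolicy, hT]
  have hdiff : (1 - γ) * (Jret P r γ (mixPolicy πt πs T) μ - Jret P r γ πt μ) =
      ∑ s, ν s * pmfExp (mixPolicy πt πs T s) (Adv P r γ πt s) := by
    rw [sum_visit_mul P _ hγ0 hγ1, Jret_sub_Jret_eq_tsum P r hγ0 hγ1 hr]
  rw [div_mul_eq_mul_div, le_div_iff₀ hγ, mul_comm, ← abs_of_pos hγ, ← abs_mul, hdiff]
  calc |∑ s, ν s * pmfExp (mixPolicy πt πs T s) (Adv P r γ πt s)|
      ≤ ∑ s, ν s * (if T s then 0 else ε) := by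
        refine (abs_sum_le_sum_abs _ _).trans (sum_le_sum fun s _ => ?_)
        rw [abs_mul, abs_of_nonneg (hν s)]
        exact mul_le_mul_of_nonneg_left (hadv s) (hν s)
    _ = (∑ s, ν s - ∑ s, ν s * (if T s then 1 else 0)) * ε := by
        rw [sub_mul, sum_mul, sum_mul, ← sum_sub_distrib]
        exact sum_congr rfl fun s _ => by cases T s <;> simp
    _ = (1 - ∑ s, ν s * (if T s then 1 else 0)) * ε := by rw [sum_visit P _ hγ0 hγ1]

end Value

theorem mix_return_two_sided_bound_general {S A : Type*}
    [Fintype S] [Fintype A]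
    (P : S → A → PMF S) (r : S → A → ℝ) (γ : ℝ) (hγ0 : 0 ≤ γ) (hγ1 : γ < 1)
    (Rmax : ℝ) (hr : ∀ (s : S) (a : A), 0 ≤ r s a ∧ r s a ≤ Rmax)
    (πt πs : S → PMF A) (habs : ∀ (s : S) (a : A), 0 < πt s a → 0 < πs s a)
    (T : S → Bool) (μ : PMF S)
    (ω : ℝ)
    (hω : ω = ∑ s, visit P (mixPolicy πt πs T) μ γ s * (if T s then (1 : ℝ) else 0))
    (H κ : ℝ)
    (hKL : ∀ s : S, pmfKL (πt s) (πs s) ≤ H - κ) :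
    Jret P r γ πt μ - Real.sqrt 2 * (1 - ω) * Rmax / (1 - γ) ^ 2 * Real.sqrt (H - κ) ≤
        Jret P r γ (mixPolicy πt πs T) μ ∧
      Jret P r γ (mixPolicy πt πs T) μ ≤
        Jret P r γ πt μ + Real.sqrt 2 * (1 - ω) * Rmax / (1 - γ) ^ 2 * Real.sqrt (H - κ) := by
  have h := abs_Jret_mixPolicy_sub_le P r hγ0 hγ1 hr πt πs T μ fun s _ =>
    abs_pmfExp_sub_le_of_pmfKL_le (habs s) (hKL s) (abs_Qval_le P r hγ0 hγ1 hr πt s)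
  have hconst : (1 - ω) / (1 - γ) * (Real.sqrt (2 * (H - κ)) * (Rmax / (1 - γ))) =
      Real.sqrt 2 * (1 - ω) * Rmax / (1 - γ) ^ 2 * Real.sqrt (H - κ) := by
    rw [Real.sqrt_mul zero_le_two]
    field_simp [(by linarith : 1 - γ ≠ 0)]
  rw [← hω, hconst, abs_sub_le_iff] at h
  constructor <;> linarith [h.1, h.2]

/-- Theorem 3 (two-sided bound on the return of the mixed behavior policy): with
intervention rate `ω = E_{s ~ ν^{π_mix,μ}}[T(s)]` and `D_KL(π^t(s)‖π^s(s)) ≤ H − κ` for all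
states, `J(π^t) − √2(1−ω)R_max/(1−γ)² √(H−κ) ≤ J(π_mix) ≤ J(π^t) + √2(1−ω)R_max/(1−γ)² √(H−κ)`. -/
theorem mix_return_two_sided_bound {S A : Type*}
    [Fintype S] [Nonempty S] [Fintype A] [Nonempty A]
    (P : S → A → PMF S) (r : S → A → ℝ) (γ : ℝ) (hγ0 : 0 ≤ γ) (hγ1 : γ < 1)
    (Rmax : ℝ) (hr : ∀ (s : S) (a : A), 0 ≤ r s a ∧ r s a ≤ Rmax)
    (πt πs : S → PMF A) (habs : ∀ (s : S) (a : A), 0 < πt s a → 0 < πs s a)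
    (T : S → Bool) (μ : PMF S)
    (ω : ℝ)
    (hω : ω = ∑ s, visit P (mixPolicy πt πs T) μ γ s * (if T s then (1 : ℝ) else 0))
    (H κ : ℝ) (hHκ : 0 ≤ H - κ)
    (hKL : ∀ s : S, pmfKL (πt s) (πs s) ≤ H - κ) :
    Jret P r γ πt μ - Real.sqrt 2 * (1 - ω) * Rmax / (1 - γ) ^ 2 * Real.sqrt (H - κ) ≤
        Jret P r γ (mixPolicy πt πs T) μ ∧
      Jret P r γ (mixPolicy πt πs T) μ ≤
        Jret P r γ πt μ + Real.sqrt 2 * (1 - ω) * Rmax / (1 - γ) ^ 2 * Real.sqrt (H - κ) :=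
  mix_return_two_sided_bound_general P r γ hγ0 hγ1 Rmax hr πt πs habs T μ ω hω H κ hKL
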